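/- For every fixed real number t ≥ 1, the univariate real polynomials J_P(x, t) and J_P(t, y), obtained by substituting y = t (respectively x = t) into the polymatroid Tutte polynomial J_P(x, y), are interpolating. -/

import Mathlib

open Finset

variable {n : ℕ}

/-- The set of bases of the integer polymatroid with rank function `f` on ground set `Fin n`:
integer vectors `a` with `a i ≥ 0`, `∑_{i ∈ I} a i ≤ f I` for every `I`, and `∑ i, a i = f [n]`.
(The upper bound `a i ≤ f {i}` used for the ambient finite set is implied by the constraints.) -/
noncomputable def PB (n : ℕ) (f : Finset (Fin n) → ℕ) : Finset (Fin n → ℤ) :=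
  (Fintype.piFinset fun i : Fin n => Finset.Icc (0 : ℤ) (f {i})).filter fun a =>
    (∀ I : Finset (Fin n), ∑ j ∈ I, a j ≤ (f I : ℤ)) ∧ ∑ j, a j = (f Finset.univ : ℤ)

/-- A set `I` is tight for `a` if `∑_{i ∈ I} a i = f I`. -/
def Tight (f : Finset (Fin n) → ℕ) (a : Fin n → ℤ) (I : Finset (Fin n)) : Prop :=
  ∑ i ∈ I, a i = (f I : ℤ)

/-- `i` is internally active with respect to `a`: `a - e_i + e_j ∉ PB` for every `j < i`. -/
def IntAct (f : Finset (Fin n) → ℕ) (a : Fin n → ℤ) (i : Fin n) : Prop :=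
  ∀ j : Fin n, j < i → a - Pi.single i 1 + Pi.single j 1 ∉ PB n f

/-- `i` is externally active with respect to `a`: `a + e_i - e_j ∉ PB` for every `j < i`. -/
def ExtAct (f : Finset (Fin n) → ℕ) (a : Fin n → ℤ) (i : Fin n) : Prop :=
  ∀ j : Fin n, j < i → a + Pi.single i 1 - Pi.single j 1 ∉ PB n f

open scoped Classical in
/-- `Int(a)`: the set of internally active indices. -/
noncomputable def IntSet (f : Finset (Fin n) → ℕ) (a : Fin n → ℤ) : Finset (Fin n) :=
  Finset.univ.filter fun i => IntAct f a i

open scoped Classical in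
/-- `Ext(a)`: the set of externally active indices. -/
noncomputable def ExtSet (f : Finset (Fin n) → ℕ) (a : Fin n → ℤ) : Finset (Fin n) :=
  Finset.univ.filter fun i => ExtAct f a i

/-- `ι(a) = |Int(a)|`, the internal activity. -/
noncomputable def iota (f : Finset (Fin n) → ℕ) (a : Fin n → ℤ) : ℕ := (IntSet f a).card

/-- `ε(a) = |Ext(a)|`, the external activity. -/
noncomputable def eps (f : Finset (Fin n) → ℕ) (a : Fin n → ℤ) : ℕ := (ExtSet f a).card

/-- `oi(a) = |Int(a) \ Ext(a)|`. -/
noncomputable def oi (f : Finset (Fin n) → ℕ) (a : Fin n → ℤ) : ℕ :=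
  (IntSet f a \ ExtSet f a).card

/-- `oe(a) = |Ext(a) \ Int(a)|`. -/
noncomputable def oe (f : Finset (Fin n) → ℕ) (a : Fin n → ℤ) : ℕ :=
  (ExtSet f a \ IntSet f a).card

/-- `ie(a) = |Int(a) ∩ Ext(a)|`. -/
noncomputable def ie (f : Finset (Fin n) → ℕ) (a : Fin n → ℤ) : ℕ :=
  (IntSet f a ∩ ExtSet f a).card

/-- A univariate polynomial is interpolating if its set of exponents with nonzero
coefficient is a set of consecutive integers. -/
def Interpolating {R : Type*} [Semiring R] (p : Polynomial R) : Prop :=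
  ∀ k l m : ℕ, k ≤ l → l ≤ m → p.coeff k ≠ 0 → p.coeff m ≠ 0 → p.coeff l ≠ 0

/-!
For `t ≥ 1` the summand `x ^ oi(a) * t ^ oe(a) * (x + t - 1) ^ ie(a)` of a basis `a` has
nonnegative coefficients, and its support is the interval `[oi(a), ι(a)]`, where
`ι(a) = oi(a) + ie(a) = |Int(a)|` (just the point `ι(a)` when `t = 1`). So nothing cancels, and
`J_P(x, t)` is interpolating once the values of `ι` on bases fill the whole range from their
minimum up to `n`.

That they do is an exchange argument. Let `a` be a lexicographically largest basis with `ι(a) ≤ k`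
and suppose `ι(a) < k ≤ n`. Moving a unit from its first internally passive index `i` to an
earlier index `j` gives a lexicographically larger basis `b`, and every index `m > i` active for
`b` is active for `a`: by submodularity, `m` is internally active iff `a m = 0` or some tight set
contains all indices below `m` but not `m`, and such a set contains both `i` and `j`, so the move
does not change its tightness. Hence `ι(b) ≤ ι(a) + 1 ≤ k`, a contradiction. Lexicographically
smallest bases, moves in the other direction and `ε(a) = |Ext(a)|` give `J_P(t, y)`.
-/

lemma exists_eq_of_exists_le_of_step {ι α : Type*} [LinearOrder α] {s : Finset ι} {r : ι → α}
    {F : ι → ℕ} {N : ℕ} (hstep : ∀ a ∈ s, F a < N → ∃ b ∈ s, r a < r b ∧ F b ≤ F a + 1)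
    {k : ℕ} (hk : k ≤ N) (h : ∃ a ∈ s, F a ≤ k) : ∃ a ∈ s, F a = k := by
  classical
  obtain ⟨a, ha, hmax⟩ :=
    (s.filter (F · ≤ k)).exists_max_image r (by simpa [Finset.Nonempty] using h)
  rw [mem_filter] at ha
  by_contra! hne
  obtain ⟨b, hb, hab, hFb⟩ := hstep a ha.1 (by have := hne a ha.1; omega)
  exact (hmax b (mem_filter.2 ⟨hb, by have := hne a ha.1; omega⟩)).not_gt hab

lemma Fin.exists_notMem_forall_lt_mem {s : Finset (Fin n)} (h : #s < n) :
    ∃ i ∉ s, ∀ m < i, m ∈ s := by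
  have hne : sᶜ.Nonempty := by
    rw [nonempty_iff_ne_empty, Ne, compl_eq_empty_iff]
    rintro rfl
    simp at h
  refine ⟨sᶜ.min' hne, mem_compl.1 (min'_mem _ _), fun m hm => ?_⟩
  by_contra hms
  exact (min'_le _ m (mem_compl.2 hms)).not_gt hm

lemma toLex_lt_toLex_sub_single_add_single (a : Fin n → ℤ) {i j : Fin n} (hji : j < i) :
    toLex a < toLex (a - Pi.single i 1 + Pi.single j 1) := by
  refine ⟨j, fun m hm => ?_, ?_⟩
  · simp [Pi.single_eq_of_ne (hm.trans hji).ne, Pi.single_eq_of_ne hm.ne]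
  · simp [Pi.single_eq_of_ne hji.ne]

lemma toLex_add_single_sub_single_lt_toLex (a : Fin n → ℤ) {i j : Fin n} (hji : j < i) :
    toLex (a + Pi.single i 1 - Pi.single j 1) < toLex a := by
  have h := toLex_lt_toLex_sub_single_add_single (a + Pi.single i 1 - Pi.single j 1) hji
  rwa [show a + Pi.single i 1 - Pi.single j 1 - Pi.single i 1 + Pi.single j 1 = a by abel] at h

open Polynomial

noncomputable def tutteTerm (t : ℝ) (g e i : ℕ) : ℝ[X] := X ^ g * C t ^ e * (X + C t - 1) ^ i

lemma coeff_tutteTerm (t : ℝ) (g e i l : ℕ) :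
    (tutteTerm t g e i).coeff l =
      if g ≤ l then t ^ e * ((t - 1) ^ (i - (l - g)) * (i.choose (l - g) : ℝ)) else 0 := by
  have : tutteTerm t g e i = C (t ^ e) * (X + C (t - 1)) ^ i * X ^ g := by
    rw [tutteTerm, C_pow, C_sub, C_1]; ring
  rw [this, coeff_mul_X_pow', coeff_C_mul, coeff_X_add_C_pow]

section Coefficients

variable {t : ℝ}

lemma coeff_tutteTerm_nonneg (ht : 1 ≤ t) (g e i l : ℕ) : 0 ≤ (tutteTerm t g e i).coeff l := by
  have : 0 ≤ t - 1 := by linarith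
  rw [coeff_tutteTerm]
  split_ifs <;> positivity

lemma coeff_tutteTerm_ne_zero_iff (ht : 1 ≤ t) {g e i l : ℕ} :
    (tutteTerm t g e i).coeff l ≠ 0 ↔ g ≤ l ∧ l ≤ g + i ∧ (t = 1 → l = g + i) := by
  have ht0 : t ≠ 0 := by positivity
  rw [coeff_tutteTerm]
  split_ifs with hgl
  · simp only [ne_eq, mul_eq_zero, pow_eq_zero_iff', Nat.cast_eq_zero, Nat.choose_eq_zero_iff,
      sub_eq_zero, ht0, false_and, false_or, not_or, not_and, not_not, not_lt]
    constructor
    · rintro ⟨h1, hli⟩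
      exact ⟨hgl, by omega, fun ht1 => by have := h1 ht1; omega⟩
    · rintro ⟨-, hli, h1⟩
      exact ⟨fun ht1 => by have := h1 ht1; omega, by omega⟩
  · simp [hgl]

lemma coeff_sum_tutteTerm_ne_zero_iff (ht : 1 ≤ t) {ι : Type*} (s : Finset ι) (g e i : ι → ℕ)
    (l : ℕ) :
    (∑ a ∈ s, tutteTerm t (g a) (e a) (i a)).coeff l ≠ 0 ↔
      ∃ a ∈ s, g a ≤ l ∧ l ≤ g a + i a ∧ (t = 1 → l = g a + i a) := by
  rw [finsetSum_coeff, Ne,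
    Finset.sum_eq_zero_iff_of_nonneg fun a _ => coeff_tutteTerm_nonneg ht _ _ _ _]
  simp only [not_forall, coeff_tutteTerm_ne_zero_iff ht, exists_prop]

theorem interpolating_sum_tutteTerm (ht : 1 ≤ t) {ι : Type*} (s : Finset ι) (g e i : ι → ℕ)
    (N : ℕ) (hle : ∀ a ∈ s, g a + i a ≤ N)
    (hex : ∀ k ≤ N, (∃ a ∈ s, g a + i a ≤ k) → ∃ a ∈ s, g a + i a = k) :
    Interpolating (∑ a ∈ s, tutteTerm t (g a) (e a) (i a)) := by
  intro k l m hkl hlm hk hm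
  rw [coeff_sum_tutteTerm_ne_zero_iff ht] at hk hm ⊢
  obtain ⟨a, ha, hak, hka, hta⟩ := hk
  obtain ⟨b, hb, -, hmb, -⟩ := hm
  by_cases hla : l ≤ g a + i a ∧ (t = 1 → l = g a + i a)
  · exact ⟨a, ha, hak.trans hkl, hla⟩
  · have hal : g a + i a ≤ l := by
      by_contra! hlt
      exact hla ⟨hlt.le, fun h1 => by have := hta h1; omega⟩
    obtain ⟨c, hc, hcl⟩ := hex l (by linarith [hle b hb]) ⟨a, ha, hal⟩
    exact ⟨c, hc, by omega, hcl.ge, fun _ => hcl.symm⟩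

end Coefficients

def IsSubmodular (f : Finset (Fin n) → ℕ) : Prop :=
  ∀ I J : Finset (Fin n), f (I ∪ J) + f (I ∩ J) ≤ f I + f J

section Polymatroid

variable {f : Finset (Fin n) → ℕ} {a : Fin n → ℤ}

lemma mem_PB_iff :
    a ∈ PB n f ↔ (∀ i, 0 ≤ a i) ∧ (∀ I : Finset (Fin n), ∑ j ∈ I, a j ≤ (f I : ℤ)) ∧
      ∑ j, a j = (f univ : ℤ) := by
  simp only [PB, mem_filter, Fintype.mem_piFinset, mem_Icc]
  refine ⟨fun ⟨h, hI, hsum⟩ => ⟨fun i => (h i).1, hI, hsum⟩,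
    fun ⟨h, hI, hsum⟩ => ⟨fun i => ⟨h i, by simpa using hI {i}⟩, hI, hsum⟩⟩

lemma sum_sub_single_add_single (a : Fin n → ℤ) (i j : Fin n) (I : Finset (Fin n)) :
    ∑ x ∈ I, (a - Pi.single i 1 + Pi.single j 1 : Fin n → ℤ) x =
      ∑ x ∈ I, a x - (if i ∈ I then 1 else 0) + (if j ∈ I then 1 else 0) := by
  simp [sum_add_distrib, sum_sub_distrib, Pi.single_apply]

lemma sub_single_add_single_mem_PB_iff (ha : a ∈ PB n f) {i j : Fin n} (hji : j ≠ i) :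
    a - Pi.single i 1 + Pi.single j 1 ∈ PB n f ↔
      1 ≤ a i ∧ ∀ I : Finset (Fin n), j ∈ I → i ∉ I → ∑ x ∈ I, a x < (f I : ℤ) := by
  obtain ⟨h0, hle, hsum⟩ := mem_PB_iff.1 ha
  rw [mem_PB_iff]
  constructor
  · rintro ⟨b0, ble, -⟩
    refine ⟨by simpa [Pi.single_eq_of_ne hji.symm] using b0 i, fun I hjI hiI => ?_⟩
    have := ble I
    rw [sum_sub_single_add_single] at this
    simp only [hjI, hiI, if_true, if_false] at this
    omega
  · rintro ⟨hai, hlt⟩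
    refine ⟨fun x => ?_, fun I => ?_, ?_⟩
    · have := h0 x
      simp only [Pi.add_apply, Pi.sub_apply, Pi.single_apply]
      split_ifs with hxj hxi <;> subst_vars <;> omega
    · have := hle I
      rw [sum_sub_single_add_single]
      split_ifs with hiI hjI hjI
      · omega
      · omega
      · linarith [hlt I hjI hiI]
      · omega
    · rw [sum_sub_single_add_single]
      simp [hsum]

lemma Tight.union_inter (hsub : IsSubmodular f) (ha : a ∈ PB n f) {I J : Finset (Fin n)}
    (hI : Tight f a I) (hJ : Tight f a J) : Tight f a (I ∪ J) ∧ Tight f a (I ∩ J) := by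
  have hle := (mem_PB_iff.1 ha).2.1
  have := hle (I ∪ J)
  have := hle (I ∩ J)
  have : (f (I ∪ J) : ℤ) + f (I ∩ J) ≤ f I + f J := by exact_mod_cast hsub I J
  have := sum_union_inter (s₁ := I) (s₂ := J) (f := a)
  unfold Tight at *
  omega

lemma exists_tight_forall_subset_of_notMem (hf0 : f ∅ = 0) (hsub : IsSubmodular f)
    (ha : a ∈ PB n f) (k : Fin n) :
    ∃ S, Tight f a S ∧ k ∉ S ∧ ∀ I, Tight f a I → k ∉ I → I ⊆ S := by
  classical
  let T := univ.filter fun I => Tight f a I ∧ k ∉ I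
  have hT : Tight f a (T.sup id) ∧ k ∉ T.sup id :=
    sup_induction (p := fun S => Tight f a S ∧ k ∉ S) ⟨by simp [Tight, hf0], notMem_empty k⟩
      (fun S hS S' hS' => ⟨(hS.1.union_inter hsub ha hS'.1).1, by simp [hS.2, hS'.2]⟩)
      (fun I hI => (mem_filter.1 hI).2)
  exact ⟨_, hT.1, hT.2, fun I hI hkI => le_sup (f := id) (mem_filter.2 ⟨mem_univ _, hI, hkI⟩)⟩

lemma exists_tight_forall_superset_of_mem (hsub : IsSubmodular f) (ha : a ∈ PB n f)
    (k : Fin n) : ∃ S, Tight f a S ∧ k ∈ S ∧ ∀ I, Tight f a I → k ∈ I → S ⊆ I := by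
  classical
  let T := univ.filter fun I => Tight f a I ∧ k ∈ I
  have hT : Tight f a (T.inf id) ∧ k ∈ T.inf id :=
    inf_induction (p := fun S => Tight f a S ∧ k ∈ S) ⟨(mem_PB_iff.1 ha).2.2, mem_univ k⟩
      (fun S hS S' hS' => ⟨(hS.1.union_inter hsub ha hS'.1).2, mem_inter.2 ⟨hS.2, hS'.2⟩⟩)
      (fun I hI => (mem_filter.1 hI).2)
  exact ⟨_, hT.1, hT.2, fun I hI hkI => inf_le (f := id) (mem_filter.2 ⟨mem_univ _, hI, hkI⟩)⟩


lemma mem_IntSet {k : Fin n} : k ∈ IntSet f a ↔ IntAct f a k := by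
  simp [IntSet]

lemma mem_ExtSet {k : Fin n} : k ∈ ExtSet f a ↔ ExtAct f a k := by
  simp [ExtSet]

lemma tight_of_le_sum (ha : a ∈ PB n f) {I : Finset (Fin n)} (h : (f I : ℤ) ≤ ∑ x ∈ I, a x) :
    Tight f a I :=
  le_antisymm ((mem_PB_iff.1 ha).2.1 I) h

lemma intAct_iff (hf0 : f ∅ = 0) (hsub : IsSubmodular f) (ha : a ∈ PB n f) (k : Fin n) :
    IntAct f a k ↔ a k = 0 ∨ ∃ S, Tight f a S ∧ (∀ m < k, m ∈ S) ∧ k ∉ S := by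
  constructor
  · intro h
    refine or_iff_not_imp_left.2 fun hak => ?_
    have hak : 1 ≤ a k := by have := (mem_PB_iff.1 ha).1 k; omega
    obtain ⟨S, hS, hkS, hmax⟩ := exists_tight_forall_subset_of_notMem hf0 hsub ha k
    refine ⟨S, hS, fun m hm => ?_, hkS⟩
    have := h m hm
    rw [sub_single_add_single_mem_PB_iff ha hm.ne] at this
    push Not at this
    obtain ⟨I, hmI, hkI, hI⟩ := this hak
    exact hmax I (tight_of_le_sum ha hI) hkI hmI
  · rintro h j hj hmem
    obtain ⟨hak, hlt⟩ := (sub_single_add_single_mem_PB_iff ha hj.ne).1 hmem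
    obtain hak0 | ⟨S, hS, hbelow, hkS⟩ := h
    · omega
    · exact (hlt S (hbelow j hj) hkS).ne hS

lemma extAct_iff (hsub : IsSubmodular f) (ha : a ∈ PB n f) (k : Fin n) :
    ExtAct f a k ↔ ∃ S, Tight f a S ∧ k ∈ S ∧ ∀ j < k, 1 ≤ a j → j ∉ S := by
  simp only [ExtAct, add_sub_right_comm a]
  constructor
  · intro h
    obtain ⟨S, hS, hkS, hmin⟩ := exists_tight_forall_superset_of_mem hsub ha k
    refine ⟨S, hS, hkS, fun j hj haj hjS => ?_⟩
    have := h j hj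
    rw [sub_single_add_single_mem_PB_iff ha hj.ne'] at this
    push Not at this
    obtain ⟨I, hkI, hjI, hI⟩ := this haj
    exact hjI (hmin I (tight_of_le_sum ha hI) hkI hjS)
  · rintro ⟨S, hS, hkS, hS'⟩ j hj hmem
    obtain ⟨haj, hlt⟩ := (sub_single_add_single_mem_PB_iff ha hj.ne').1 hmem
    exact (hlt S hkS (hS' j hj haj)).ne hS


lemma IntAct.of_sub_single_add_single (hf0 : f ∅ = 0) (hsub : IsSubmodular f)
    (ha : a ∈ PB n f) {i j k : Fin n} (hb : a - Pi.single i 1 + Pi.single j 1 ∈ PB n f)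
    (hji : j < i) (hik : i < k) (h : IntAct f (a - Pi.single i 1 + Pi.single j 1) k) :
    IntAct f a k := by
  have hbk : (a - Pi.single i 1 + Pi.single j 1 : Fin n → ℤ) k = a k := by
    simp [Pi.single_eq_of_ne hik.ne', Pi.single_eq_of_ne (hji.trans hik).ne']
  rw [intAct_iff hf0 hsub ha]
  rcases (intAct_iff hf0 hsub hb k).1 h with h0 | ⟨S, hS, hbelow, hkS⟩
  · exact Or.inl (hbk ▸ h0)
  · refine Or.inr ⟨S, ?_, hbelow, hkS⟩
    have hsum := sum_sub_single_add_single a i j S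
    rw [if_pos (hbelow i hik), if_pos (hbelow j (hji.trans hik))] at hsum
    unfold Tight at hS ⊢
    omega

lemma ExtAct.of_add_single_sub_single (hsub : IsSubmodular f) (ha : a ∈ PB n f)
    {i j k : Fin n} (hb : a + Pi.single i 1 - Pi.single j 1 ∈ PB n f) (hji : j < i)
    (hik : i < k) (h : ExtAct f (a + Pi.single i 1 - Pi.single j 1) k) : ExtAct f a k := by
  obtain ⟨h0, hle, -⟩ := mem_PB_iff.1 ha
  rw [add_sub_right_comm] at hb h
  obtain ⟨S, hS, hkS, habove⟩ := (extAct_iff hsub hb k).1 h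
  have hiS : i ∉ S := habove i hik <| by
    simpa [Pi.single_eq_of_ne hji.ne'] using h0 i
  have hsum := sum_sub_single_add_single a j i S
  rw [if_neg hiS] at hsum
  have hjS : j ∉ S := by
    intro hjS
    rw [if_pos hjS] at hsum
    have := hle S
    unfold Tight at hS
    omega
  rw [if_neg hjS] at hsum
  refine (extAct_iff hsub ha k).2 ⟨S, by unfold Tight at hS ⊢; omega, hkS, fun j' hj' haj' => ?_⟩
  by_cases hj'j : j' = j
  · exact hj'j ▸ hjS
  · refine habove j' hj' ?_
    simp only [Pi.add_apply, Pi.sub_apply, Pi.single_apply, hj'j, if_false]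
    split_ifs <;> omega

lemma exists_toLex_gt_iota_le_succ (hf0 : f ∅ = 0) (hsub : IsSubmodular f) (ha : a ∈ PB n f)
    (h : iota f a < n) : ∃ b ∈ PB n f, toLex a < toLex b ∧ iota f b ≤ iota f a + 1 := by
  obtain ⟨i, hi, hbelow⟩ := Fin.exists_notMem_forall_lt_mem h
  rw [mem_IntSet, IntAct] at hi
  push Not at hi
  obtain ⟨j, hji, hb⟩ := hi
  have hsubset : IntSet f (a - Pi.single i 1 + Pi.single j 1) ⊆ insert i (IntSet f a) := by
    intro k hk
    rcases lt_trichotomy k i with hki | rfl | hik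
    · exact mem_insert_of_mem (hbelow k hki)
    · exact mem_insert_self _ _
    · exact mem_insert_of_mem <| mem_IntSet.2 <|
        (mem_IntSet.1 hk).of_sub_single_add_single hf0 hsub ha hb hji hik
  exact ⟨_, hb, toLex_lt_toLex_sub_single_add_single a hji,
    (card_le_card hsubset).trans (card_insert_le _ _)⟩

lemma exists_toLex_lt_eps_le_succ (hsub : IsSubmodular f) (ha : a ∈ PB n f)
    (h : eps f a < n) : ∃ b ∈ PB n f, toLex b < toLex a ∧ eps f b ≤ eps f a + 1 := by
  obtain ⟨i, hi, hbelow⟩ := Fin.exists_notMem_forall_lt_mem h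
  rw [mem_ExtSet, ExtAct] at hi
  push Not at hi
  obtain ⟨j, hji, hb⟩ := hi
  have hsubset : ExtSet f (a + Pi.single i 1 - Pi.single j 1) ⊆ insert i (ExtSet f a) := by
    intro k hk
    rcases lt_trichotomy k i with hki | rfl | hik
    · exact mem_insert_of_mem (hbelow k hki)
    · exact mem_insert_self _ _
    · exact mem_insert_of_mem <| mem_ExtSet.2 <|
        (mem_ExtSet.1 hk).of_add_single_sub_single hsub ha hb hji hik
  exact ⟨_, hb, toLex_add_single_sub_single_lt_toLex a hji,
    (card_le_card hsubset).trans (card_insert_le _ _)⟩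

end Polymatroid

section Counting

variable (f : Finset (Fin n) → ℕ) (a : Fin n → ℤ)

lemma oi_add_ie : oi f a + ie f a = iota f a :=
  card_sdiff_add_card_inter _ _

lemma oe_add_ie : oe f a + ie f a = eps f a := by
  rw [oe, ie, inter_comm]
  exact card_sdiff_add_card_inter _ _

lemma iota_le : iota f a ≤ n := by
  simpa [iota] using card_le_univ (IntSet f a)

lemma eps_le : eps f a ≤ n := by
  simpa [eps] using card_le_univ (ExtSet f a)

end Counting

theorem J_x_t_and_t_y_interpolating_general
    (n : ℕ) (f : Finset (Fin n) → ℕ)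
    (hf0 : f ∅ = 0)
    (hsub : ∀ I J : Finset (Fin n), f (I ∪ J) + f (I ∩ J) ≤ f I + f J)
    (t : ℝ) (ht : 1 ≤ t) :
    Interpolating (∑ a ∈ PB n f,
        (Polynomial.X : Polynomial ℝ) ^ oi f a * Polynomial.C t ^ oe f a *
          (Polynomial.X + Polynomial.C t - 1) ^ ie f a) ∧
    Interpolating (∑ a ∈ PB n f,
        Polynomial.C t ^ oi f a * (Polynomial.X : Polynomial ℝ) ^ oe f a *
          (Polynomial.C t + Polynomial.X - 1) ^ ie f a) := by
  have hswap : ∑ a ∈ PB n f, C t ^ oi f a * (X : ℝ[X]) ^ oe f a * (C t + X - 1) ^ ie f a =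
      ∑ a ∈ PB n f, tutteTerm t (oe f a) (oi f a) (ie f a) :=
    sum_congr rfl fun a _ => by rw [tutteTerm]; ring
  constructor
  · refine interpolating_sum_tutteTerm ht (PB n f) (oi f) (oe f) (ie f) n
      (fun a _ => oi_add_ie f a ▸ iota_le f a) ?_
    simp only [oi_add_ie]
    exact fun k hk => exists_eq_of_exists_le_of_step
      (fun a ha => exists_toLex_gt_iota_le_succ hf0 hsub ha) hk
  · rw [hswap]
    refine interpolating_sum_tutteTerm ht (PB n f) (oe f) (oi f) (ie f) n
      (fun a _ => oe_add_ie f a ▸ eps_le f a) ?_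
    simp only [oe_add_ie]
    exact fun k hk => exists_eq_of_exists_le_of_step (r := fun b => OrderDual.toDual (toLex b))
      (fun a ha => exists_toLex_lt_eps_le_succ hsub ha) hk

/-- For every real `t ≥ 1`, the specializations `J_P(x,t)` and `J_P(t,y)` of the
polymatroid Tutte polynomial are interpolating. -/
theorem J_x_t_and_t_y_interpolating
    (n : ℕ) (hn : 0 < n) (f : Finset (Fin n) → ℕ)
    (hf0 : f ∅ = 0)
    (hmono : ∀ I J : Finset (Fin n), I ⊆ J → f I ≤ f J)
    (hsub : ∀ I J : Finset (Fin n), f (I ∪ J) + f (I ∩ J) ≤ f I + f J)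
    (t : ℝ) (ht : 1 ≤ t) :
    Interpolating (∑ a ∈ PB n f,
        (Polynomial.X : Polynomial ℝ) ^ oi f a * Polynomial.C t ^ oe f a *
          (Polynomial.X + Polynomial.C t - 1) ^ ie f a) ∧
    Interpolating (∑ a ∈ PB n f,
        Polynomial.C t ^ oi f a * (Polynomial.X : Polynomial ℝ) ^ oe f a *
          (Polynomial.C t + Polynomial.X - 1) ^ ie f a) :=
  J_x_t_and_t_y_interpolating_general n f hf0 hsub t ht
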